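/- arXiv:2602.04080 — 3 statements merged into one kernel-verified Lean document; each statement's English description precedes it below -/
import Mathlib

section
/- Let U be a u-dimensional F_{q^2}-subspace of F_{q^2}^n. Then the F_q-dimension of the space of Hermitian n×n matrices over F_{q^2} whose column space is contained in U equals u^2. -/
open Matrix Module

/-- The `K`-subspace of matrices with column space contained in `U`. -/
def colRes {K : Type*} [Field K] {n : ℕ} (U : Submodule K (Fin n → K)) :
    Submodule K (Matrix (Fin n) (Fin n) K) where
  carrier := {M | ∀ v : Fin n → K, M.mulVec v ∈ U}
  add_mem' := by
    intro A B hA hB v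
    rw [Matrix.add_mulVec]
    exact U.add_mem (hA v) (hB v)
  zero_mem' := by
    intro v
    rw [Matrix.zero_mulVec]
    exact U.zero_mem
  smul_mem' := by
    intro c A hA v
    rw [Matrix.smul_mulVec]
    exact U.smul_mem c (hA v)

/-- The `F`-subspace of `σ`-Hermitian `n×n` matrices over `K`, where `σ` fixes
the subfield `F` pointwise. -/
def herSub (F : Type*) {K : Type*} [Field F] [Field K] [Algebra F K] (n : ℕ)
    (σ : K ≃+* K)
    (hfix : ∀ c : F, σ (algebraMap F K c) = algebraMap F K c) :
    Submodule F (Matrix (Fin n) (Fin n) K) where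
  carrier := {M | (M.map σ)ᵀ = M}
  add_mem' := by
    intro A B hA hB
    simp only [Set.mem_setOf_eq] at *
    ext i j
    have hA' := congrFun (congrFun hA i) j
    have hB' := congrFun (congrFun hB i) j
    simp only [Matrix.transpose_apply, Matrix.map_apply] at hA' hB' ⊢
    simp [Matrix.add_apply, map_add, hA', hB']
  zero_mem' := by
    simp only [Set.mem_setOf_eq]
    ext i j
    simp
  smul_mem' := by
    intro c A hA
    simp only [Set.mem_setOf_eq] at *
    ext i j
    have hA' := congrFun (congrFun hA i) j
    simp only [Matrix.transpose_apply, Matrix.map_apply] at hA' ⊢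
    rw [Matrix.smul_apply, Matrix.smul_apply, Algebra.smul_def, Algebra.smul_def,
      _root_.map_mul, hfix, hA']
/-!
Write `Mᴴ` for the `σ`-conjugate transpose. Taking the columns of an `n × u` matrix `C` to be a
basis of `U` and `D` a left inverse of `C`, the map `B ↦ C B Cᴴ` identifies `Her_{u,q}` with
`Her_{n,q}(U)`, with inverse `M ↦ D M Dᴴ`. To count `Her_{u,q}`, pick `θ` with `θ^q ≠ θ`:
every `M` is uniquely `A + θ B` with `A, B` Hermitian (`B = (θ - θ^q)⁻¹ (M - Mᴴ)`), so
`2 dim_{F_q} Her_{u,q} = dim_{F_q} F_{q^2}^{u×u} = 2u²`.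
-/

section ConjTransposeBy

variable {K : Type*} [Field K] (σ : K ≃+* K) {m p : Type*}

def conjTransposeBy (M : Matrix m p K) : Matrix p m K := (M.map σ)ᵀ

@[simp]
lemma conjTransposeBy_apply (M : Matrix m p K) (i : p) (j : m) :
    conjTransposeBy σ M i j = σ (M j i) := rfl

@[simp]
lemma conjTransposeBy_zero : conjTransposeBy σ (0 : Matrix m p K) = 0 := by
  ext; simp

@[simp]
lemma conjTransposeBy_add (A B : Matrix m p K) :
    conjTransposeBy σ (A + B) = conjTransposeBy σ A + conjTransposeBy σ B := by
  ext; simp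

@[simp]
lemma conjTransposeBy_sub (A B : Matrix m p K) :
    conjTransposeBy σ (A - B) = conjTransposeBy σ A - conjTransposeBy σ B := by
  ext; simp

@[simp]
lemma conjTransposeBy_smul (c : K) (A : Matrix m p K) :
    conjTransposeBy σ (c • A) = σ c • conjTransposeBy σ A := by
  ext; simp

lemma conjTransposeBy_mul [Fintype p] {r : Type*} (A : Matrix m p K) (B : Matrix p r K) :
    conjTransposeBy σ (A * B) = conjTransposeBy σ B * conjTransposeBy σ A := by
  simp [conjTransposeBy, Matrix.transpose_mul]

lemma conjTransposeBy_one [DecidableEq m] : conjTransposeBy σ (1 : Matrix m m K) = 1 := by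
  simp [conjTransposeBy]

lemma conjTransposeBy_conjTransposeBy (hσ : ∀ x, σ (σ x) = x) (M : Matrix m p K) :
    conjTransposeBy σ (conjTransposeBy σ M) = M := by
  ext; simp [hσ]

end ConjTransposeBy

lemma mem_herSub_iff {F K : Type*} [Field F] [Field K] [Algebra F K] {n : ℕ} {σ : K ≃+* K}
    {hfix : ∀ c : F, σ (algebraMap F K c) = algebraMap F K c} {M : Matrix (Fin n) (Fin n) K} :
    M ∈ herSub F n σ hfix ↔ conjTransposeBy σ M = M := Iff.rfl

section HermitianDecomposition

variable {F K : Type*} [Field F] [Field K] [Algebra F K] (n : ℕ) {σ : K ≃+* K}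
  (hfix : ∀ c : F, σ (algebraMap F K c) = algebraMap F K c)

def herSubProdToMatrix (θ : K) :
    herSub F n σ hfix × herSub F n σ hfix →ₗ[F] Matrix (Fin n) (Fin n) K :=
  (herSub F n σ hfix).subtype.coprod
    ((θ • LinearMap.id : Matrix (Fin n) (Fin n) K →ₗ[F] _) ∘ₗ
      (herSub F n σ hfix).subtype)

lemma herSubProdToMatrix_apply (θ : K) (A B : herSub F n σ hfix) :
    herSubProdToMatrix n hfix θ (A, B) = A.1 + θ • B.1 :=
  rfl

lemma herSubProdToMatrix_injective {θ : K} (hθ : σ θ ≠ θ) :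
    Function.Injective (herSubProdToMatrix n hfix θ) := by
  rw [← LinearMap.ker_eq_bot, LinearMap.ker_eq_bot']
  rintro ⟨⟨A, hA⟩, ⟨B, hB⟩⟩ h
  rw [herSubProdToMatrix_apply] at h
  have hδ : θ - σ θ ≠ 0 := sub_ne_zero.mpr (Ne.symm hθ)
  have h' : A + σ θ • B = 0 := by
    simpa [mem_herSub_iff.mp hA, mem_herSub_iff.mp hB] using congrArg (conjTransposeBy σ) h
  have hB0 : B = 0 := by
    have : (θ - σ θ) • B = 0 := by
      rw [sub_smul, ← add_sub_add_left_eq_sub _ _ A, h, h', sub_self]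
    exact (smul_eq_zero.mp this).resolve_left hδ
  subst hB0
  rw [smul_zero, add_zero] at h
  subst h
  rfl

lemma herSubProdToMatrix_surjective {θ : K} (hθ : σ θ ≠ θ) (hinv : ∀ x, σ (σ x) = x) :
    Function.Surjective (herSubProdToMatrix n hfix θ) := by
  intro M
  have hδ : θ - σ θ ≠ 0 := sub_ne_zero.mpr (Ne.symm hθ)
  set B := (θ - σ θ)⁻¹ • (M - conjTransposeBy σ M) with hB
  have hBher : conjTransposeBy σ B = B := by
    have : σ (θ - σ θ)⁻¹ = -(θ - σ θ)⁻¹ := by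
      rw [map_inv₀, map_sub, hinv, ← inv_neg, neg_sub]
    rw [hB, conjTransposeBy_smul, conjTransposeBy_sub, conjTransposeBy_conjTransposeBy σ hinv,
      this, neg_smul, ← smul_neg, neg_sub]
  have hAher : conjTransposeBy σ (M - θ • B) = M - θ • B := by
    have : M - conjTransposeBy σ M = (θ - σ θ) • B := by rw [hB, smul_inv_smul₀ hδ]
    rw [conjTransposeBy_sub, conjTransposeBy_smul, hBher]
    linear_combination (norm := module) -this
  exact ⟨(⟨M - θ • B, hAher⟩, ⟨B, hBher⟩), by simp [herSubProdToMatrix_apply]⟩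

lemma two_mul_finrank_herSub [FiniteDimensional F K] (hinv : ∀ x, σ (σ x) = x)
    (hσ : σ ≠ RingEquiv.refl K) :
    2 * finrank F (herSub F n σ hfix) = finrank F (Matrix (Fin n) (Fin n) K) := by
  obtain ⟨θ, hθ⟩ := DFunLike.ne_iff.mp hσ
  rw [← (LinearEquiv.ofBijective _ ⟨herSubProdToMatrix_injective n hfix hθ,
    herSubProdToMatrix_surjective n hfix hθ hinv⟩).finrank_eq, finrank_prod, two_mul]

end HermitianDecomposition

section FiniteField

variable {K : Type*} [Field K] [Fintype K] {q : ℕ}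

lemma one_lt_of_card_eq_sq (hK : Fintype.card K = q ^ 2) : 1 < q := by
  have := hK ▸ Fintype.one_lt_card (α := K)
  by_contra! hq
  nlinarith

lemma finrank_eq_two_of_card_eq_sq {F : Type*} [Field F] [Fintype F] [Algebra F K]
    (hF : Fintype.card F = q) (hK : Fintype.card K = q ^ 2) : finrank F K = 2 := by
  refine Nat.pow_right_injective (one_lt_of_card_eq_sq hK) (?_ : q ^ finrank F K = q ^ 2)
  rw [← hF, ← Module.card_eq_pow_finrank, hK, hF]

variable {σ : K ≃+* K} (hK : Fintype.card K = q ^ 2) (hσ : ∀ x, σ x = x ^ q)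
include hK hσ

lemma frobenius_involutive (x : K) : σ (σ x) = x := by
  rw [hσ, hσ, ← pow_mul, ← sq, ← hK, FiniteField.pow_card]

lemma frobenius_ne_refl : σ ≠ RingEquiv.refl K := by
  intro hrefl
  have hq := one_lt_of_card_eq_sq hK
  refine FiniteField.X_pow_card_sub_X_ne_zero K hq
    (Polynomial.eq_zero_of_natDegree_lt_card_of_eval_eq_zero _ (f := id) Function.injective_id
      (fun x => ?_) ?_)
  · simp [← hσ, hrefl]
  · rw [FiniteField.X_pow_card_sub_X_natDegree_eq K hq, hK]
    exact lt_self_pow₀ hq one_lt_two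

end FiniteField

lemma finrank_herSub {F K : Type*} [Field F] [Field K] [Algebra F K] [Fintype F] [Fintype K]
    {q : ℕ} (n : ℕ) (hF : Fintype.card F = q) (hK : Fintype.card K = q ^ 2) {σ : K ≃+* K}
    (hσ : ∀ x, σ x = x ^ q) (hfix : ∀ c : F, σ (algebraMap F K c) = algebraMap F K c) :
    finrank F (herSub F n σ hfix) = n ^ 2 := by
  have := two_mul_finrank_herSub n hfix (frobenius_involutive hK hσ) (frobenius_ne_refl hK hσ)
  rw [finrank_matrix, finrank_eq_two_of_card_eq_sq hF hK] at this
  simp only [Fintype.card_fin] at this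
  linarith

section ColumnSpaceReduction

variable {K : Type*} [Field K] {n u : ℕ}

lemma exists_mul_eq_one_and_range_mulVecLin_eq (U : Submodule K (Fin n → K))
    (hu : finrank K U = u) :
    ∃ (C : Matrix (Fin n) (Fin u) K) (D : Matrix (Fin u) (Fin n) K),
      D * C = 1 ∧ LinearMap.range C.mulVecLin = U := by
  let i := U.subtype ∘ₗ (finBasisOfFinrankEq K U hu).equivFun.symm.toLinearMap
  obtain ⟨g, hg⟩ := i.exists_leftInverse_of_injective (by simp [i, LinearMap.ker_comp])
  refine ⟨LinearMap.toMatrix' i, LinearMap.toMatrix' g, ?_, ?_⟩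
  · rw [← LinearMap.toMatrix'_comp, hg, LinearMap.toMatrix'_id]
  · rw [← Matrix.toLin'_apply', Matrix.toLin'_toMatrix', LinearMap.range_comp,
      LinearEquiv.range, Submodule.map_top, Submodule.range_subtype]

lemma mem_colRes_range_iff {C : Matrix (Fin n) (Fin u) K} {D : Matrix (Fin u) (Fin n) K}
    (hDC : D * C = 1) {M : Matrix (Fin n) (Fin n) K} :
    M ∈ colRes (LinearMap.range C.mulVecLin) ↔ C * D * M = M := by
  refine ⟨fun hM => ?_, fun hM v => ?_⟩
  · refine ext_of_mulVec_single fun j => ?_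
    obtain ⟨w, hw⟩ := hM (Pi.single j 1)
    rw [← mulVec_mulVec, ← mulVec_mulVec, ← hw, Matrix.mulVecLin_apply, mulVec_mulVec _ D,
      hDC, one_mulVec]
  · rw [← hM]
    exact ⟨D *ᵥ (M *ᵥ v), by simp [mulVec_mulVec, Matrix.mul_assoc]⟩

end ColumnSpaceReduction

section Congruence

variable {F K : Type*} [Field F] [Field K] [Algebra F K] {σ : K ≃+* K}
  (hfix : ∀ c : F, σ (algebraMap F K c) = algebraMap F K c) (hinv : ∀ x, σ (σ x) = x)
include hinv

lemma mul_mul_conjTransposeBy_mem_herSub {m k : ℕ} (X : Matrix (Fin m) (Fin k) K)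
    {A : Matrix (Fin k) (Fin k) K} (hA : A ∈ herSub F k σ hfix) :
    X * A * conjTransposeBy σ X ∈ herSub F m σ hfix := by
  rw [mem_herSub_iff] at hA ⊢
  rw [conjTransposeBy_mul, conjTransposeBy_mul, conjTransposeBy_conjTransposeBy σ hinv, hA,
    Matrix.mul_assoc]

def herSubEquivHerSubInfColRes {n u : ℕ} {C : Matrix (Fin n) (Fin u) K}
    {D : Matrix (Fin u) (Fin n) K} (hDC : D * C = 1) :
    herSub F u σ hfix ≃ₗ[F]
      ↥(herSub F n σ hfix ⊓ (colRes (LinearMap.range C.mulVecLin)).restrictScalars F) where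
  toFun B := ⟨C * B.1 * conjTransposeBy σ C,
    mul_mul_conjTransposeBy_mem_herSub hfix hinv C B.2, (mem_colRes_range_iff hDC).mpr <| by
      simp only [Matrix.mul_assoc, ← Matrix.mul_assoc D C, hDC, Matrix.one_mul]⟩
  invFun M := ⟨D * M.1 * conjTransposeBy σ D,
    mul_mul_conjTransposeBy_mem_herSub hfix hinv D (Submodule.mem_inf.mp M.2).1⟩
  map_add' A B := by ext1; simp [Matrix.mul_add, Matrix.add_mul]
  map_smul' c B := by ext1; simp
  left_inv B := by
    ext1
    calc D * (C * B.1 * conjTransposeBy σ C) * conjTransposeBy σ D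
        = D * C * B.1 * conjTransposeBy σ (D * C) := by
          simp only [conjTransposeBy_mul, Matrix.mul_assoc]
      _ = B := by rw [hDC, conjTransposeBy_one, Matrix.one_mul, Matrix.mul_one]
  right_inv M := by
    obtain ⟨hMher, hMcol⟩ := Submodule.mem_inf.mp M.2
    replace hMher : conjTransposeBy σ M.1 = M := hMher
    have hCDM : C * D * M.1 = M := (mem_colRes_range_iff hDC).mp hMcol
    ext1
    calc C * (D * M.1 * conjTransposeBy σ D) * conjTransposeBy σ C
        = C * D * M.1 * (conjTransposeBy σ D * conjTransposeBy σ C) := by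
          simp only [Matrix.mul_assoc]
      _ = conjTransposeBy σ (C * D * M.1) := by
          rw [conjTransposeBy_mul, conjTransposeBy_mul, hMher, hCDM]
      _ = M := by rw [hCDM, hMher]

end Congruence

/-- The `F_q`-dimension of the space of Hermitian matrices with column space contained
in a `u`-dimensional `F_{q^2}`-subspace `U` equals `u^2`. -/
theorem dim_her_anticode
    {F K : Type*} [Field F] [Field K] [Algebra F K] [Fintype F] [Fintype K]
    {q n u : ℕ} (hF : Fintype.card F = q) (hK : Fintype.card K = q ^ 2)
    (σ : K ≃+* K) (hσ : ∀ x : K, σ x = x ^ q)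
    (hfix : ∀ c : F, σ (algebraMap F K c) = algebraMap F K c)
    (U : Submodule K (Fin n → K)) (hu : finrank K U = u) :
    finrank F ↥(herSub F n σ hfix ⊓ (colRes U).restrictScalars F) = u ^ 2 := by
  obtain ⟨C, D, hDC, rfl⟩ := exists_mul_eq_one_and_range_mulVecLin_eq U hu
  rw [← (herSubEquivHerSubInfColRes hfix (frobenius_involutive hK hσ) hDC).finrank_eq,
    finrank_herSub u hF hK hσ hfix]
end

section
/- Let U be a u-dimensional subspace of the ambient column space with u ≤ ⌊n/2⌋. Then the maximum rank of a matrix in X_{n,q}(U)* equals the maximum rank attained in X_{n,q} (in particular n for Sym and Her, and 2⌊n/2⌋ for Alt). -/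
open Matrix Module

section Defs

variable {K : Type*} [Field K] {n : ℕ}

/-- The set of alternating `n×n` matrices. -/
def altSet (K : Type*) [Field K] (n : ℕ) : Set (Matrix (Fin n) (Fin n) K) :=
  {M | Mᵀ = -M ∧ ∀ i, M i i = 0}

/-- The set of symmetric `n×n` matrices. -/
def symSet (K : Type*) [Field K] (n : ℕ) : Set (Matrix (Fin n) (Fin n) K) :=
  {M | Mᵀ = M}

/-- The set of `σ`-Hermitian `n×n` matrices. -/
def herSet (K : Type*) [Field K] (n : ℕ) (σ : K ≃+* K) : Set (Matrix (Fin n) (Fin n) K) :=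
  {M | (M.map σ)ᵀ = M}

/-- The set of matrices with column space contained in `U`. -/
def colSet (U : Submodule K (Fin n → K)) : Set (Matrix (Fin n) (Fin n) K) :=
  {M | ∀ v : Fin n → K, M.mulVec v ∈ U}

/-- The bilinear form `Σ_{i<j} a_{ij} b_{ij}` used on alternating matrices. -/
def altForm (A B : Matrix (Fin n) (Fin n) K) : K :=
  ∑ p ∈ Finset.univ.filter (fun p : Fin n × Fin n => p.1 < p.2), A p.1 p.2 * B p.1 p.2

/-- The dual in `Alt_{n,q}` of the anticode `Alt_{n,q}(U)`. -/
def dualAlt (U : Submodule K (Fin n → K)) : Set (Matrix (Fin n) (Fin n) K) :=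
  {B ∈ altSet K n | ∀ A ∈ altSet K n ∩ colSet U, altForm A B = 0}

/-- The dual in `Sym_{n,q}` of the anticode `Sym_{n,q}(U)`. -/
def dualSym (U : Submodule K (Fin n → K)) : Set (Matrix (Fin n) (Fin n) K) :=
  {B ∈ symSet K n | ∀ A ∈ symSet K n ∩ colSet U, Matrix.trace (A * Bᵀ) = 0}

/-- The dual in `Her_{n,q}` of the anticode `Her_{n,q}(U)`. -/
def dualHer (σ : K ≃+* K) (U : Submodule K (Fin n → K)) : Set (Matrix (Fin n) (Fin n) K) :=
  {B ∈ herSet K n σ | ∀ A ∈ herSet K n σ ∩ colSet U, Matrix.trace (A * Bᵀ) = 0}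

/-- The maximum rank of a nonzero element of a set of matrices. -/
noncomputable def maxrk (D : Set (Matrix (Fin n) (Fin n) K)) : ℕ :=
  sSup {r | ∃ M ∈ D, M ≠ 0 ∧ M.rank = r}

end Defs

/-!
Take `B` in `X_{n,q}` such that `U` is totally isotropic for the (σ-sesqui)linear form
`(x, y) ↦ x ⬝ᵥ B *ᵥ σ y`. If `P` is a projection onto `U`, every `A` in `X_{n,q}(U)` satisfies
`A = P A (P^σ)ᵀ`, so its pairing with `B` equals its pairing with `Pᵀ B P^σ = 0`; hence `B` lies
in the dual. Since `dim U ≤ ⌊n/2⌋`, a linear automorphism `Q` carries `U` into the span of the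
first `u` coordinates, which is totally isotropic for the hyperbolic matrices `W`
(`[[0, I, 0], [I, 0, 0], [0, 0, I]]`, resp. `[[0, I, 0], [-I, 0, 0], [0, 0, 0]]`). Then
`Qᵀ W Q^σ` lies in the dual and has rank `n`, resp. `2⌊n/2⌋`, which is the largest possible:
an alternating matrix of odd size is singular, as the generic one over `ℤ` is.
-/
section AltRank

variable {K : Type*} [Field K] {n : ℕ}

lemma det_eq_zero_of_transpose_eq_neg {R : Type*} [CommRing R] [IsDomain R] [CharZero R]
    (hn : Odd n) {M : Matrix (Fin n) (Fin n) R} (hM : Mᵀ = -M) : M.det = 0 := by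
  have h : M.det = -M.det := by
    conv_lhs => rw [← det_transpose, hM, det_neg, Fintype.card_fin, hn.neg_one_pow]
    ring
  have h2 : (2 : R) * M.det = 0 := by linear_combination h
  simpa using h2

open MvPolynomial in
noncomputable def genericAlt (n : ℕ) : Matrix (Fin n) (Fin n) (MvPolynomial (Fin n × Fin n) ℤ) :=
  of fun i j => if i < j then X (i, j) else if j < i then -X (j, i) else 0

lemma genericAlt_transpose : (genericAlt n)ᵀ = -genericAlt n := by
  ext i j
  simp only [genericAlt, transpose_apply, of_apply]
  rcases lt_trichotomy i j with h | rfl | h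
  · simp [h, h.not_gt]
  · simp
  · simp [h, h.not_gt]

open MvPolynomial in
lemma genericAlt_map_eval {M : Matrix (Fin n) (Fin n) K} (hM : M ∈ altSet K n) :
    (genericAlt n).map (eval₂Hom (Int.castRingHom K) fun p => M p.1 p.2) = M := by
  obtain ⟨hMt, hMd⟩ := hM
  ext i j
  simp only [genericAlt, map_apply, of_apply]
  rcases lt_trichotomy i j with h | rfl | h
  · simp [h]
  · simp [hMd]
  · simpa [h, h.not_gt] using (congrFun (congrFun hMt j) i).symm

lemma det_eq_zero_of_mem_altSet (hn : Odd n) {M : Matrix (Fin n) (Fin n) K}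
    (hM : M ∈ altSet K n) : M.det = 0 := by
  rw [← genericAlt_map_eval hM, ← RingHom.mapMatrix_apply, ← RingHom.map_det,
    det_eq_zero_of_transpose_eq_neg hn genericAlt_transpose, map_zero]

lemma rank_lt_of_det_eq_zero {M : Matrix (Fin n) (Fin n) K} (h : M.det = 0) : M.rank < n := by
  refine (M.rank_le_width).lt_of_ne fun hr => ?_
  have hsurj : Function.Surjective M.mulVec := by
    rw [← Matrix.coe_mulVecLin, ← LinearMap.range_eq_top]
    exact Submodule.eq_top_of_finrank_eq (by rwa [finrank_fin_fun])
  exact (isUnit_iff_isUnit_det M).mp (mulVec_surjective_iff_isUnit.mp hsurj) |>.ne_zero h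

lemma rank_le_of_mem_altSet {M : Matrix (Fin n) (Fin n) K} (hM : M ∈ altSet K n) :
    M.rank ≤ 2 * (n / 2) := by
  rcases Nat.even_or_odd n with hn | hn
  · obtain ⟨k, rfl⟩ := hn
    have := M.rank_le_width
    omega
  · have := rank_lt_of_det_eq_zero (det_eq_zero_of_mem_altSet hn hM)
    omega

end AltRank

lemma maxrk_eq_of_rank_le_of_mem {K : Type*} [Field K] {n r : ℕ}
    {D : Set (Matrix (Fin n) (Fin n) K)} {B : Matrix (Fin n) (Fin n) K}
    (hD : ∀ M ∈ D, M.rank ≤ r) (hB : B ∈ D) (hBr : B.rank = r) : maxrk D = r := by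
  have hub : r ∈ upperBounds {r | ∃ M ∈ D, M ≠ 0 ∧ M.rank = r} := by
    rintro _ ⟨M, hM, -, rfl⟩
    exact hD M hM
  refine le_antisymm (csSup_le' hub) ?_
  rcases eq_or_ne r 0 with rfl | hr
  · exact Nat.zero_le _
  · refine le_csSup ⟨r, hub⟩ ⟨B, hB, ?_, hBr⟩
    rintro rfl
    exact hr (by simpa using hBr.symm)

section Dual

variable {K : Type*} [Field K] {n : ℕ}

def IsTotallyIsotropic (σ : K →+* K) (B : Matrix (Fin n) (Fin n) K)
    (U : Submodule K (Fin n → K)) : Prop :=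
  ∀ x ∈ U, ∀ y ∈ U, x ⬝ᵥ B *ᵥ (σ ∘ y) = 0

lemma exists_mulVec_mem_and_mul_eq_self (U : Submodule K (Fin n → K)) :
    ∃ P : Matrix (Fin n) (Fin n) K, (∀ v, P *ᵥ v ∈ U) ∧ ∀ A ∈ colSet U, P * A = A := by
  obtain ⟨f, hf⟩ := U.subtype.exists_leftInverse_of_injective U.ker_subtype
  refine ⟨LinearMap.toMatrix' (U.subtype ∘ₗ f), fun v => ?_, fun A hA => ?_⟩
  · simp [LinearMap.toMatrix'_mulVec]
  · rw [ext_iff_mulVec]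
    intro v
    rw [← mulVec_mulVec, LinearMap.toMatrix'_mulVec]
    simpa using congrArg Subtype.val (LinearMap.congr_fun hf ⟨_, hA v⟩)

lemma exists_mul_mul_map_transpose_eq_self (σ : K →+* K) {U : Submodule K (Fin n → K)}
    {A : Matrix (Fin n) (Fin n) K} {c : K} (hc : c ≠ 0) (hA : A ∈ colSet U)
    (hAσ : (A.map σ)ᵀ = c • A) :
    ∃ P : Matrix (Fin n) (Fin n) K, (∀ v, P *ᵥ v ∈ U) ∧ P * A * (P.map σ)ᵀ = A := by
  obtain ⟨P, hPU, hPA⟩ := exists_mulVec_mem_and_mul_eq_self U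
  refine ⟨P, hPU, ?_⟩
  have h := congrArg (fun M => (M.map σ)ᵀ) (hPA A hA)
  simp only [Matrix.map_mul, transpose_mul, hAσ, smul_mul] at h
  rw [hPA A hA, smul_right_injective _ hc h]

lemma transpose_mul_mul_map_eq_zero {σ : K →+* K} {B : Matrix (Fin n) (Fin n) K}
    {U : Submodule K (Fin n → K)} (hB : IsTotallyIsotropic σ B U)
    {P : Matrix (Fin n) (Fin n) K} (hP : ∀ v, P *ᵥ v ∈ U) : Pᵀ * B * P.map σ = 0 := by
  ext i j
  have h := hB _ (hP (Pi.single i 1)) _ (hP (Pi.single j 1))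
  simp only [mulVec_single_one] at h
  rw [Matrix.zero_apply, ← h]
  simp only [mul_apply, transpose_apply, map_apply, dotProduct, mulVec, col_apply,
    Function.comp_apply, Finset.sum_mul, Finset.mul_sum, mul_assoc]
  exact Finset.sum_comm

lemma trace_conj_mul_transpose (P Q A C : Matrix (Fin n) (Fin n) K) :
    trace (P * A * Qᵀ * Cᵀ) = trace (A * (Pᵀ * C * Q)ᵀ) := by
  simp only [transpose_mul, transpose_transpose, Matrix.mul_assoc]
  rw [trace_mul_comm]
  simp only [Matrix.mul_assoc]

end Dual

section Alternating

variable {K : Type*} [Field K] {n : ℕ}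

lemma trace_mul_transpose_eq_zero_of_mem_altSet {A D : Matrix (Fin n) (Fin n) K}
    (hA : A ∈ altSet K n) (hD : Dᵀ = D) : trace (A * Dᵀ) = 0 := by
  have hswap : ∀ p : Fin n × Fin n, A p.1 p.2 * D p.1 p.2 + A p.2 p.1 * D p.2 p.1 = 0 := by
    intro p
    have hA' := congrFun (congrFun hA.1 p.2) p.1
    have hD' := congrFun (congrFun hD p.2) p.1
    simp only [transpose_apply, Matrix.neg_apply] at hA' hD'
    rw [hA', hD']
    ring
  simp only [trace, diag, mul_apply, transpose_apply]
  rw [← Fintype.sum_prod_type']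
  refine Finset.sum_ninvolution Prod.swap hswap (fun p hp hfix => hp ?_)
    (fun _ => Finset.mem_univ _) Prod.swap_swap
  obtain ⟨i, j⟩ := p
  obtain rfl : j = i := congrArg Prod.fst hfix
  simp [hA.2]

lemma dotProduct_mulVec_self_eq_zero {A : Matrix (Fin n) (Fin n) K} (hA : A ∈ altSet K n)
    (v : Fin n → K) : v ⬝ᵥ A *ᵥ v = 0 := by
  rw [← trace_mul_transpose_eq_zero_of_mem_altSet hA (transpose_vecMulVec v v)]
  simp only [trace, diag, mul_apply, transpose_apply, vecMulVec_apply, dotProduct, mulVec,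
    Finset.mul_sum]
  refine Finset.sum_congr rfl fun i _ => Finset.sum_congr rfl fun j _ => ?_
  ring

def strictUpper (B : Matrix (Fin n) (Fin n) K) : Matrix (Fin n) (Fin n) K :=
  of fun i j => if i < j then B i j else 0

/-- `altForm A B` is half of `trace (A * Bᵀ)`, which is of no use in characteristic `2`;
the strict upper triangle of `B` avoids the division. -/
lemma altForm_eq_trace_mul_transpose_strictUpper (A B : Matrix (Fin n) (Fin n) K) :
    altForm A B = trace (A * (strictUpper B)ᵀ) := by
  simp only [altForm, trace, diag, mul_apply, transpose_apply, strictUpper, of_apply, mul_ite,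
    mul_zero]
  rw [Finset.sum_filter, Fintype.sum_prod_type]

lemma strictUpper_sub_transpose {B : Matrix (Fin n) (Fin n) K} (hB : B ∈ altSet K n) :
    strictUpper B - (strictUpper B)ᵀ = B := by
  ext i j
  have hBij := congrFun (congrFun hB.1 i) j
  simp only [transpose_apply, Matrix.neg_apply] at hBij
  simp only [strictUpper, Matrix.sub_apply, transpose_apply, of_apply]
  rcases lt_trichotomy i j with h | rfl | h
  · simp [h, h.not_gt]
  · simp [hB.2]
  · simp [h, h.not_gt, hBij]

lemma mem_dualAlt_of_isTotallyIsotropic {U : Submodule K (Fin n → K)}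
    {B : Matrix (Fin n) (Fin n) K} (hB : B ∈ altSet K n)
    (hU : IsTotallyIsotropic (RingHom.id K) B U) : B ∈ dualAlt U := by
  refine ⟨hB, fun A ⟨hAalt, hA⟩ => ?_⟩
  obtain ⟨P, hPU, hPA⟩ := exists_mul_mul_map_transpose_eq_self (RingHom.id K)
    (neg_ne_zero.2 one_ne_zero) hA (by simpa using hAalt.1)
  have hPB := transpose_mul_mul_map_eq_zero hU hPU
  simp only [RingHom.coe_id, map_id] at hPA hPB
  have hsymm : (Pᵀ * strictUpper B * P)ᵀ = Pᵀ * strictUpper B * P := by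
    have h : Pᵀ * strictUpper B * P - (Pᵀ * strictUpper B * P)ᵀ = Pᵀ * B * P := by
      conv_rhs => rw [← strictUpper_sub_transpose hB]
      simp only [transpose_mul, transpose_transpose, Matrix.mul_sub, Matrix.sub_mul,
        Matrix.mul_assoc]
    rw [hPB, sub_eq_zero] at h
    exact h.symm
  rw [altForm_eq_trace_mul_transpose_strictUpper, ← hPA, trace_conj_mul_transpose,
    trace_mul_transpose_eq_zero_of_mem_altSet hAalt hsymm]

end Alternating

section Hermitian

variable {K : Type*} [Field K] {n : ℕ}

lemma mem_dualHer_of_isTotallyIsotropic {σ : K ≃+* K} {U : Submodule K (Fin n → K)}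
    {B : Matrix (Fin n) (Fin n) K} (hB : B ∈ herSet K n σ)
    (hU : IsTotallyIsotropic (σ : K →+* K) B U) : B ∈ dualHer σ U := by
  refine ⟨hB, fun A ⟨hAσ, hA⟩ => ?_⟩
  obtain ⟨P, hPU, hPA⟩ := exists_mul_mul_map_transpose_eq_self (σ : K →+* K) one_ne_zero hA
    (by rw [one_smul]; exact hAσ)
  rw [← hPA, trace_conj_mul_transpose, transpose_mul_mul_map_eq_zero hU hPU, transpose_zero,
    Matrix.mul_zero, trace_zero]

lemma herSet_refl : herSet K n (RingEquiv.refl K) = symSet K n := by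
  ext M
  simp [herSet, symSet]

lemma dualHer_refl (U : Submodule K (Fin n → K)) : dualHer (RingEquiv.refl K) U = dualSym U := by
  simp only [dualHer, dualSym, herSet_refl]

end Hermitian

section Witness

variable {K : Type*} [Field K] {n u m : ℕ}

lemma exists_linearEquiv_apply_eq_zero {U : Submodule K (Fin n → K)} (hU : finrank K U = u)
    (hun : u ≤ n) :
    ∃ g : (Fin n → K) ≃ₗ[K] (Fin n → K), ∀ x ∈ U, ∀ i : Fin n, u ≤ i → g x i = 0 := by
  let ι := Function.ExtendByZero.linearMap K (Fin.castLE hun)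
  have hι : Function.Injective ι := Function.extend_injective (Fin.castLE_injective hun) 0
  let e := LinearEquiv.ofFinrankEq U (LinearMap.range ι)
    (by rw [hU, LinearMap.finrank_range_of_inj hι, finrank_fin_fun])
  obtain ⟨g, hg⟩ := Submodule.exists_linearEquiv_restrict_eq e
  refine ⟨g, fun x hx i hi => ?_⟩
  obtain ⟨w, hw⟩ := (e ⟨x, hx⟩).2
  rw [← hg ⟨x, hx⟩, ← hw]
  refine Function.extend_apply' _ _ _ ?_
  rintro ⟨j, rfl⟩
  exact absurd hi (by simp)

lemma dotProduct_transpose_mul_mul_map_mulVec (σ : K →+* K) (Q W : Matrix (Fin n) (Fin n) K)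
    (x y : Fin n → K) :
    x ⬝ᵥ (Qᵀ * W * Q.map σ) *ᵥ (σ ∘ y) = (Q *ᵥ x) ⬝ᵥ W *ᵥ (σ ∘ (Q *ᵥ y)) := by
  have hσ : Q.map σ *ᵥ (σ ∘ y) = σ ∘ (Q *ᵥ y) := funext fun i => (RingHom.map_mulVec σ Q y i).symm
  rw [← mulVec_mulVec, ← mulVec_mulVec, hσ, dotProduct_mulVec, vecMul_transpose]

lemma exists_isUnit_isTotallyIsotropic (σ : K →+* K) {W : Matrix (Fin n) (Fin n) K}
    (hW : ∀ k l : Fin n, (k : ℕ) < u → (l : ℕ) < u → W k l = 0)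
    {U : Submodule K (Fin n → K)} (hU : finrank K U = u) (hun : u ≤ n) :
    ∃ Q : Matrix (Fin n) (Fin n) K, IsUnit Q ∧ IsTotallyIsotropic σ (Qᵀ * W * Q.map σ) U := by
  obtain ⟨g, hg⟩ := exists_linearEquiv_apply_eq_zero hU hun
  refine ⟨LinearMap.toMatrix' g, LinearMap.isUnit_toMatrix'_iff.2 ?_, fun x hx y hy => ?_⟩
  · exact (Module.End.isUnit_iff _).2 g.bijective
  rw [dotProduct_transpose_mul_mul_map_mulVec, LinearMap.toMatrix'_mulVec,
    LinearMap.toMatrix'_mulVec]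
  refine Finset.sum_eq_zero fun k _ => ?_
  rcases le_or_gt u k with hk | hk
  · simp [hg x hx k hk]
  simp only [mulVec, dotProduct, Function.comp_apply]
  refine mul_eq_zero_of_right _ (Finset.sum_eq_zero fun l _ => ?_)
  rcases le_or_gt u l with hl | hl
  · simp [hg y hy l hl]
  · simp [hW k l hk hl]

lemma rank_transpose_mul_mul_map (σ : K →+* K) {Q : Matrix (Fin n) (Fin n) K} (hQ : IsUnit Q)
    (W : Matrix (Fin n) (Fin n) K) : (Qᵀ * W * Q.map σ).rank = W.rank := by
  have hQ' : IsUnit Q.det := (isUnit_iff_isUnit_det Q).mp hQ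
  have hQσ : IsUnit (Q.map σ).det := by
    rw [← RingHom.mapMatrix_apply, ← RingHom.map_det]
    exact hQ'.map σ
  rw [rank_mul_eq_left_of_isUnit_det _ _ hQσ,
    rank_mul_eq_right_of_isUnit_det _ _ (by rwa [det_transpose])]

lemma transpose_mul_mul_mem_altSet {W : Matrix (Fin n) (Fin n) K} (hW : W ∈ altSet K n)
    (Q : Matrix (Fin n) (Fin n) K) : Qᵀ * W * Q ∈ altSet K n := by
  refine ⟨by simp [hW.1, Matrix.mul_assoc], fun i => ?_⟩
  have h := dotProduct_transpose_mul_mul_map_mulVec (RingHom.id K) Q W (Pi.single i 1)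
    (Pi.single i 1)
  simp only [RingHom.coe_id, map_id, Function.id_comp, dotProduct_mulVec_self_eq_zero hW] at h
  simpa using h

lemma transpose_mul_mul_map_mem_herSet (σ : K ≃+* K) (hσ : ∀ x, σ (σ x) = x)
    {W : Matrix (Fin n) (Fin n) K} (hW : W ∈ herSet K n σ) (Q : Matrix (Fin n) (Fin n) K) :
    Qᵀ * W * Q.map σ ∈ herSet K n σ := by
  have hmul : ∀ M N : Matrix (Fin n) (Fin n) K, (M * N).map σ = M.map σ * N.map σ :=
    fun _ _ => Matrix.map_mul
  have hQσσ : (Q.map σ).map σ = Q := by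
    rw [map_map]
    exact (congrArg Q.map (funext hσ)).trans (map_id Q)
  change ((Qᵀ * W * Q.map σ).map σ)ᵀ = _
  rw [hmul, hmul, hQσσ, transpose_mul, transpose_mul, hW, transpose_map, transpose_transpose,
    Matrix.mul_assoc]

end Witness

section Hyperbolic

variable {K : Type*} [Field K] {n u m : ℕ}

lemma permMatrix_apply_eq_ite (τ : Equiv.Perm (Fin n)) (i j : Fin n) :
    τ.permMatrix K i j = if τ i = j then 1 else 0 := by
  simp [Equiv.Perm.permMatrix, PEquiv.toMatrix_apply]

lemma isUnit_det_permMatrix (τ : Equiv.Perm (Fin n)) : IsUnit (τ.permMatrix K).det := by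
  rw [det_permutation]
  exact (Equiv.Perm.sign τ).isUnit.map (Int.castRingHom K)

def swapHalves (h : 2 * m ≤ n) : Equiv.Perm (Fin n) :=
  Function.Involutive.toPerm
    (fun i => ⟨if (i : ℕ) < m then i + m else if (i : ℕ) < 2 * m then i - m else i,
      by split_ifs <;> omega⟩)
    fun i => by ext; simp only; split_ifs <;> omega

lemma swapHalves_val (h : 2 * m ≤ n) (i : Fin n) :
    (swapHalves h i : ℕ) = if (i : ℕ) < m then i + m else if (i : ℕ) < 2 * m then i - m else i :=
  rfl

lemma swapHalves_symm (h : 2 * m ≤ n) : (swapHalves h).symm = swapHalves h :=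
  Function.Involutive.toPerm_symm _

/-- The matrix `[[0, I_m, 0], [I_m, 0, 0], [0, 0, I_{n-2m}]]`. -/
def hyperbolicSym (K : Type*) [Field K] (h : 2 * m ≤ n) : Matrix (Fin n) (Fin n) K :=
  (swapHalves h).permMatrix K

/-- The matrix `[[0, I_m, 0], [-I_m, 0, 0], [0, 0, 0]]`. -/
def hyperbolicAlt (K : Type*) [Field K] (h : 2 * m ≤ n) : Matrix (Fin n) (Fin n) K :=
  diagonal (fun i : Fin n => if (i : ℕ) < m then 1 else if (i : ℕ) < 2 * m then -1 else 0) *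
    (swapHalves h).permMatrix K

lemma hyperbolicSym_mem_herSet (h : 2 * m ≤ n) (σ : K ≃+* K) :
    hyperbolicSym K h ∈ herSet K n σ := by
  have hmap : (hyperbolicSym K h).map σ = hyperbolicSym K h := by
    ext i j
    simp [hyperbolicSym, apply_ite σ]
  change ((hyperbolicSym K h).map σ)ᵀ = _
  rw [hmap, hyperbolicSym, transpose_permMatrix, Equiv.Perm.inv_def, swapHalves_symm]

lemma rank_hyperbolicSym (h : 2 * m ≤ n) : (hyperbolicSym K h).rank = n := by
  rw [hyperbolicSym, rank_of_isUnit _ ((isUnit_iff_isUnit_det _).2 (isUnit_det_permMatrix _)),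
    Fintype.card_fin]

lemma hyperbolicSym_apply_eq_zero (h : 2 * m ≤ n) (hum : u ≤ m) (k l : Fin n)
    (hk : (k : ℕ) < u) (hl : (l : ℕ) < u) : hyperbolicSym K h k l = 0 := by
  rw [hyperbolicSym, permMatrix_apply_eq_ite, if_neg]
  intro hkl
  have := swapHalves_val h k
  rw [hkl, if_pos (by omega)] at this
  omega

lemma hyperbolicAlt_apply (h : 2 * m ≤ n) (i j : Fin n) :
    hyperbolicAlt K h i j = if (i : ℕ) < m ∧ (j : ℕ) = i + m then 1
      else if (j : ℕ) < m ∧ (i : ℕ) = j + m then -1 else 0 := by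
  rw [hyperbolicAlt, diagonal_mul, permMatrix_apply_eq_ite]
  simp only [Fin.ext_iff, swapHalves_val]
  split_ifs <;> first | omega | simp

lemma hyperbolicAlt_mem_altSet (h : 2 * m ≤ n) : hyperbolicAlt K h ∈ altSet K n := by
  refine ⟨?_, fun i => ?_⟩
  · ext i j
    simp only [transpose_apply, Matrix.neg_apply, hyperbolicAlt_apply]
    split_ifs <;> first | omega | simp
  · rw [hyperbolicAlt_apply]
    split_ifs <;> first | omega | rfl

lemma rank_hyperbolicAlt (h : 2 * m ≤ n) : (hyperbolicAlt K h).rank = 2 * m := by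
  classical
  rw [hyperbolicAlt, rank_mul_eq_left_of_isUnit_det _ _ (isUnit_det_permMatrix _), rank_diagonal]
  have hsupp : ∀ i : Fin n, (if (i : ℕ) < m then (1 : K) else if (i : ℕ) < 2 * m then -1 else 0) ≠ 0
      ↔ (i : ℕ) < 2 * m := by
    intro i
    split_ifs <;> simp <;> omega
  rw [Fintype.card_congr (Equiv.subtypeEquivRight hsupp), Fintype.card_subtype,
    Fin.card_filter_val_lt]
  omega

lemma hyperbolicAlt_apply_eq_zero (h : 2 * m ≤ n) (hum : u ≤ m) (k l : Fin n)
    (hk : (k : ℕ) < u) (hl : (l : ℕ) < u) : hyperbolicAlt K h k l = 0 := by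
  rw [hyperbolicAlt_apply]
  split_ifs <;> first | omega | rfl

end Hyperbolic

section Existence

variable {K : Type*} [Field K] {n u : ℕ} {U : Submodule K (Fin n → K)}

lemma exists_mem_dualAlt_rank_eq (hU : finrank K U = u) (hun : u ≤ n / 2) :
    ∃ B ∈ dualAlt U, B.rank = 2 * (n / 2) := by
  have hm : 2 * (n / 2) ≤ n := Nat.mul_div_le n 2
  obtain ⟨Q, hQ, hiso⟩ := exists_isUnit_isTotallyIsotropic (RingHom.id K)
    (hyperbolicAlt_apply_eq_zero hm hun) hU (by omega)
  have hrank := rank_transpose_mul_mul_map (RingHom.id K) hQ (hyperbolicAlt K hm)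
  simp only [RingHom.coe_id, map_id] at hiso hrank
  exact ⟨_, mem_dualAlt_of_isTotallyIsotropic
    (transpose_mul_mul_mem_altSet (hyperbolicAlt_mem_altSet hm) Q) hiso,
    hrank.trans (rank_hyperbolicAlt hm)⟩

lemma exists_mem_dualHer_rank_eq (σ : K ≃+* K) (hσ : ∀ x, σ (σ x) = x) (hU : finrank K U = u)
    (hun : u ≤ n / 2) : ∃ B ∈ dualHer σ U, B.rank = n := by
  have hm : 2 * (n / 2) ≤ n := Nat.mul_div_le n 2
  obtain ⟨Q, hQ, hiso⟩ := exists_isUnit_isTotallyIsotropic (σ : K →+* K)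
    (hyperbolicSym_apply_eq_zero hm hun) hU (by omega)
  have hrank := rank_transpose_mul_mul_map (σ : K →+* K) hQ (hyperbolicSym K hm)
  simp only [RingEquiv.coe_toRingHom] at hiso hrank
  exact ⟨_, mem_dualHer_of_isTotallyIsotropic
    (transpose_mul_mul_map_mem_herSet σ hσ (hyperbolicSym_mem_herSet hm σ) Q) hiso,
    hrank.trans (rank_hyperbolicSym hm)⟩

lemma exists_mem_dualSym_rank_eq (hU : finrank K U = u) (hun : u ≤ n / 2) :
    ∃ B ∈ dualSym U, B.rank = n := by
  rw [← dualHer_refl]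
  exact exists_mem_dualHer_rank_eq _ (fun _ => rfl) hU hun

end Existence

theorem maxrk_dual_anticode_small_u_general
    {F K : Type*} [Field F] [Field K] [Fintype K]
    {q n u : ℕ} (hK : Fintype.card K = q ^ 2)
    (σ : K ≃+* K) (hσ : ∀ x : K, σ x = x ^ q)
    (hun : u ≤ n / 2)
    (U : Submodule F (Fin n → F)) (hU : finrank F U = u)
    (UK : Submodule K (Fin n → K)) (hUK : finrank K UK = u) :
    (maxrk (dualAlt U) = maxrk (altSet F n) ∧ maxrk (altSet F n) = 2 * (n / 2)) ∧
    (maxrk (dualSym U) = maxrk (symSet F n) ∧ maxrk (symSet F n) = n) ∧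
    (maxrk (dualHer σ UK) = maxrk (herSet K n σ) ∧ maxrk (herSet K n σ) = n) := by
  have hσσ : ∀ x : K, σ (σ x) = x := fun x => by
    rw [hσ, hσ, ← pow_mul, ← sq, ← hK, FiniteField.pow_card]
  obtain ⟨Ba, hBa, hBar⟩ := exists_mem_dualAlt_rank_eq hU hun
  obtain ⟨Bs, hBs, hBsr⟩ := exists_mem_dualSym_rank_eq hU hun
  obtain ⟨Bh, hBh, hBhr⟩ := exists_mem_dualHer_rank_eq σ hσσ hUK hun
  have hAlt : maxrk (altSet F n) = 2 * (n / 2) :=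
    maxrk_eq_of_rank_le_of_mem (fun _ hM => rank_le_of_mem_altSet hM) hBa.1 hBar
  have hDualAlt : maxrk (dualAlt U) = 2 * (n / 2) :=
    maxrk_eq_of_rank_le_of_mem (fun _ hM => rank_le_of_mem_altSet hM.1) hBa hBar
  have hSym : maxrk (symSet F n) = n :=
    maxrk_eq_of_rank_le_of_mem (fun M _ => M.rank_le_width) hBs.1 hBsr
  have hDualSym : maxrk (dualSym U) = n :=
    maxrk_eq_of_rank_le_of_mem (fun M _ => M.rank_le_width) hBs hBsr
  have hHer : maxrk (herSet K n σ) = n :=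
    maxrk_eq_of_rank_le_of_mem (fun M _ => M.rank_le_width) hBh.1 hBhr
  have hDualHer : maxrk (dualHer σ UK) = n :=
    maxrk_eq_of_rank_le_of_mem (fun M _ => M.rank_le_width) hBh hBhr
  exact ⟨⟨hDualAlt.trans hAlt.symm, hAlt⟩, ⟨hDualSym.trans hSym.symm, hSym⟩,
    ⟨hDualHer.trans hHer.symm, hHer⟩⟩

/-- If `u ≤ ⌊n/2⌋`, the maximum rank of a matrix in `X_{n,q}(U)*` equals the maximum
rank attained in `X_{n,q}`: in particular `n` for `Sym` and `Her`, and `2⌊n/2⌋` for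
`Alt`. -/
theorem maxrk_dual_anticode_small_u
    {F K : Type*} [Field F] [Fintype F] [Field K] [Fintype K]
    {q n u : ℕ} (hF : Fintype.card F = q) (hK : Fintype.card K = q ^ 2)
    (σ : K ≃+* K) (hσ : ∀ x : K, σ x = x ^ q)
    (hun : u ≤ n / 2)
    (U : Submodule F (Fin n → F)) (hU : finrank F U = u)
    (UK : Submodule K (Fin n → K)) (hUK : finrank K UK = u) :
    (maxrk (dualAlt U) = maxrk (altSet F n) ∧ maxrk (altSet F n) = 2 * (n / 2)) ∧
    (maxrk (dualSym U) = maxrk (symSet F n) ∧ maxrk (symSet F n) = n) ∧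
    (maxrk (dualHer σ UK) = maxrk (herSet K n σ) ∧ maxrk (herSet K n σ) = n) :=
  maxrk_dual_anticode_small_u_general hK σ hσ hun U hU UK hUK
end

section
/- Let C ⊆ Alt_{n,q} be an F_q-linear code (alternating matrices) with d_rk(C) = n, n even. Then dim_{F_q} C ≤ n/2. -/
/-!
Let `M₁, …, M_k` be a basis of `C` and `d = det (∑ Xᵢ Mᵢ) ∈ F[X₁, …, X_k]`. It is homogeneous of
degree `n`, and since the determinant of an alternating matrix over an integrally closed domain is
a square (Pfaffian), `d = g²` with `deg g ≤ n / 2`. Every nonzero element of `C` is invertible, so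
`g` vanishes only at the origin, and Chevalley–Warning forces `k ≤ deg g`.
-/

open Matrix Module MvPolynomial

namespace Matrix

/-- The zero diagonal is not implied by `Aᵀ = -A` in characteristic `2`. -/
def IsAlternating {n R : Type*} [Neg R] [Zero R] (A : Matrix n n R) : Prop :=
  Aᵀ = -A ∧ ∀ i, A i i = 0

namespace IsAlternating

variable {m n R : Type*}

variable [CommRing R] {A B : Matrix n n R}

theorem apply_swap (hA : A.IsAlternating) (i j : n) : A j i = -A i j :=
  congr_fun (congr_fun hA.1 i) j

theorem zero : (0 : Matrix n n R).IsAlternating := ⟨by simp, fun _ => rfl⟩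

theorem add (hA : A.IsAlternating) (hB : B.IsAlternating) : (A + B).IsAlternating :=
  ⟨by rw [transpose_add, hA.1, hB.1, neg_add], fun i => by simp [hA.2 i, hB.2 i]⟩

theorem smul (hA : A.IsAlternating) (r : R) : (r • A).IsAlternating :=
  ⟨by rw [transpose_smul, hA.1, smul_neg], fun i => by simp [hA.2 i]⟩

theorem sum {ι : Type*} (s : Finset ι) {A : ι → Matrix n n R}
    (hA : ∀ i ∈ s, (A i).IsAlternating) : (∑ i ∈ s, A i).IsAlternating :=
  Finset.sum_induction _ _ (fun _ _ => add) zero hA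

theorem map {S : Type*} [CommRing S] (hA : A.IsAlternating) (f : R →+* S) :
    (A.map f).IsAlternating :=
  ⟨by rw [← transpose_map, hA.1, Matrix.map_neg _ (map_neg f)], fun i => by simp [hA.2 i]⟩

theorem submatrix (hA : A.IsAlternating) (e : m → n) : (A.submatrix e e).IsAlternating :=
  ⟨by rw [transpose_submatrix, hA.1]; rfl, fun i => hA.2 (e i)⟩

theorem dotProduct_mulVec_self [Fintype n] (hA : A.IsAlternating) (v : n → R) :
    v ⬝ᵥ (A *ᵥ v) = 0 := by
  simp only [dotProduct, mulVec, Finset.mul_sum, ← Finset.sum_product']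
  refine Finset.sum_involution (fun p _ => p.swap) (fun p _ => ?_) (fun p _ hp => ?_)
    (fun p _ => Finset.mem_univ _) (fun p _ => rfl)
  · rw [Prod.fst_swap, Prod.snd_swap, hA.apply_swap]; ring
  · intro h
    have hdiag : p.1 = p.2 := congr_arg Prod.snd h
    exact hp (by rw [← hdiag, hA.2, zero_mul, mul_zero])

theorem mul_mul_transpose [Fintype n] (hA : A.IsAlternating) (B : Matrix m n R) :
    (B * A * Bᵀ).IsAlternating :=
  ⟨by rw [transpose_mul, transpose_mul, transpose_transpose, hA.1, Matrix.neg_mul,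
      Matrix.mul_neg, Matrix.mul_assoc],
   fun k => by
    change (B k ᵥ* A) ⬝ᵥ B k = 0
    rw [← dotProduct_mulVec, hA.dotProduct_mulVec_self]⟩

theorem neg (hA : A.IsAlternating) : (-A).IsAlternating :=
  ⟨by rw [transpose_neg, hA.1], fun i => by simp [hA.2 i]⟩

theorem inv [Fintype n] [DecidableEq n] (hA : A.IsAlternating) : A⁻¹.IsAlternating := by
  by_cases hdet : IsUnit A.det
  · have hdetT : IsUnit Aᵀ.det := by rwa [det_transpose]
    -- `A⁻¹ = A⁻¹ Aᵀ A⁻¹ᵀ` is congruent to `-A`.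
    have hself := mul_nonsing_inv_cancel_right Aᵀ A⁻¹ hdetT
    rw [← transpose_nonsing_inv, hA.1, Matrix.mul_neg, Matrix.neg_mul] at hself
    rw [← hself]
    exact (hA.mul_mul_transpose A⁻¹).neg
  · rw [nonsing_inv_apply_not_isUnit A hdet]
    exact zero

theorem schur_complement [Fintype m] [DecidableEq m] {A : Matrix (m ⊕ n) (m ⊕ n) R}
    (hA : A.IsAlternating) :
    (A.toBlocks₂₂ - A.toBlocks₂₁ * A.toBlocks₁₁⁻¹ * A.toBlocks₁₂).IsAlternating := by
  have h₁₂ : A.toBlocks₁₂ = -A.toBlocks₂₁ᵀ := by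
    ext i j
    exact hA.apply_swap (Sum.inr j) (Sum.inl i)
  rw [h₁₂, Matrix.mul_neg, sub_neg_eq_add]
  exact (hA.submatrix Sum.inr).add ((hA.submatrix Sum.inl).inv.mul_mul_transpose _)

theorem det_fin_two {A : Matrix (Fin 2) (Fin 2) R} (hA : A.IsAlternating) :
    A.det = A 0 1 * A 0 1 := by
  rw [Matrix.det_fin_two, hA.2, hA.2, hA.apply_swap 0 1]
  ring

end IsAlternating
end Matrix

theorem Equiv.Perm.exists_apply_eq_apply_eq {α : Type*} [DecidableEq α] {a b i j : α}
    (hab : a ≠ b) (hij : i ≠ j) : ∃ τ : Equiv.Perm α, τ a = i ∧ τ b = j := by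
  set σ := Equiv.swap a i
  have hσb : σ b ≠ i := fun h => hab (σ.injective (h.trans (Equiv.swap_apply_left a i).symm)).symm
  refine ⟨σ.trans (Equiv.swap (σ b) j), ?_, Equiv.swap_apply_left _ _⟩
  rw [Equiv.trans_apply, Equiv.swap_apply_left]
  exact Equiv.swap_apply_of_ne_of_ne hσb.symm hij

namespace Matrix.IsAlternating

theorem det_eq_mul_det_schur_complement {K m : Type*} [Field K] [Fintype m] [DecidableEq m]
    {A : Matrix (Fin 2 ⊕ m) (Fin 2 ⊕ m) K} (hA : A.IsAlternating) (ha : A (.inl 0) (.inl 1) ≠ 0) :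
    A.det = A (.inl 0) (.inl 1) * A (.inl 0) (.inl 1) *
      (A.toBlocks₂₂ - A.toBlocks₂₁ * A.toBlocks₁₁⁻¹ * A.toBlocks₁₂).det := by
  have hP : A.toBlocks₁₁.det = A (.inl 0) (.inl 1) * A (.inl 0) (.inl 1) :=
    (hA.submatrix Sum.inl).det_fin_two
  have := invertibleOfIsUnitDet _ (hP ▸ (ha.isUnit.mul ha.isUnit))
  rw [← hP, ← invOf_eq_nonsing_inv, ← det_fromBlocks₁₁, fromBlocks_toBlocks]

theorem isSquare_det_fin {K : Type*} [Field K] (n : ℕ) {A : Matrix (Fin n) (Fin n) K}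
    (hA : A.IsAlternating) : IsSquare A.det := by
  induction n using Nat.strong_induction_on with
  | _ n ih =>
  by_cases hA0 : A = 0
  · rcases isEmpty_or_nonempty (Fin n) with _ | _
    · exact ⟨1, by simp [det_isEmpty]⟩
    · exact ⟨0, by simp [hA0]⟩
  obtain ⟨i, j, ha⟩ : ∃ i j, A i j ≠ 0 := by
    by_contra! h
    exact hA0 (ext h)
  have hij : i ≠ j := by
    rintro rfl
    exact ha (hA.2 i)
  -- Move the nonzero entry to position `(0, 1)` and split off that `2 × 2` block.
  obtain ⟨m, rfl⟩ : ∃ m, n = m + 2 := ⟨n - 2, by have := Fin.val_injective.ne hij; omega⟩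
  let e₁ : Fin 2 ⊕ Fin m ≃ Fin (m + 2) := finSumFinEquiv.trans (finCongr (Nat.add_comm 2 m))
  obtain ⟨τ, hτi, hτj⟩ := Equiv.Perm.exists_apply_eq_apply_eq
    (e₁.injective.ne (by simp) : e₁ (.inl 0) ≠ e₁ (.inl 1)) hij
  let e := e₁.trans τ
  have hei : e (.inl 0) = i := hτi
  have hej : e (.inl 1) = j := hτj
  have hdet := (hA.submatrix e).det_eq_mul_det_schur_complement (by simpa [hei, hej] using ha)
  obtain ⟨g, hg⟩ := ih m (by omega) (hA.submatrix e).schur_complement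
  refine ⟨A i j * g, ?_⟩
  rw [← det_submatrix_equiv_self e A, hdet, hg]
  simp only [submatrix_apply, hei, hej]
  ring

theorem isSquare_det {n R : Type*} [Fintype n] [DecidableEq n] [CommRing R] [IsDomain R]
    [IsIntegrallyClosed R] {A : Matrix n n R} (hA : A.IsAlternating) : IsSquare A.det := by
  let K := FractionRing R
  obtain ⟨r, hr⟩ := ((hA.map (algebraMap R K)).submatrix (Fintype.equivFin n).symm).isSquare_det_fin
  rw [det_submatrix_equiv_self, ← RingHom.mapMatrix_apply, ← RingHom.map_det] at hr
  have hint : IsIntegral R r :=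
    ⟨Polynomial.X ^ 2 - Polynomial.C A.det, Polynomial.monic_X_pow_sub_C _ two_ne_zero,
      by simp [hr, sq]⟩
  obtain ⟨g, rfl⟩ := IsIntegrallyClosed.isIntegral_iff.mp hint
  exact ⟨g, IsFractionRing.injective R K (by rw [hr, map_mul])⟩

end Matrix.IsAlternating

namespace MvPolynomial

theorem two_mul_totalDegree_le_of_isHomogeneous_mul_self {σ R : Type*} [CommRing R] [IsDomain R]
    {g : MvPolynomial σ R} {N : ℕ} (h : (g * g).IsHomogeneous N) : 2 * g.totalDegree ≤ N := by
  rcases eq_or_ne g 0 with rfl | hg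
  · simp
  rw [two_mul, ← totalDegree_mul_of_isDomain hg hg]
  exact h.totalDegree_le

theorem card_le_totalDegree_of_eval_eq_zero_iff {σ K : Type*} [Fintype σ] [Field K] [Fintype K]
    {f : MvPolynomial σ K} (h : ∀ x, eval x f = 0 ↔ x = 0) : Fintype.card σ ≤ f.totalDegree := by
  classical
  by_contra! hlt
  have hzeros : Fintype.card { x : σ → K // eval x f = 0 } = 1 :=
    Fintype.card_eq_one_iff.mpr ⟨⟨0, (h 0).mpr rfl⟩, fun x => Subtype.ext ((h x).mp x.2)⟩
  have hdvd := char_dvd_card_solutions (ringChar K) hlt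
  rw [hzeros, Nat.dvd_one] at hdvd
  exact CharP.char_ne_one K (ringChar K) hdvd

end MvPolynomial

namespace Matrix

variable {ι n R : Type*} [Fintype ι] [CommRing R]

noncomputable def genericCombination (M : ι → Matrix n n R) : Matrix n n (MvPolynomial ι R) :=
  ∑ i, (X i : MvPolynomial ι R) • (M i).map C

theorem map_eval_genericCombination (M : ι → Matrix n n R) (x : ι → R) :
    (genericCombination M).map (eval x) = ∑ i, x i • M i := by
  ext r c
  simp [genericCombination, sum_apply, mul_comm]

theorem isHomogeneous_genericCombination_apply (M : ι → Matrix n n R) (r c : n) :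
    (genericCombination M r c).IsHomogeneous 1 := by
  simp only [genericCombination, sum_apply, smul_apply, map_apply, smul_eq_mul]
  exact IsHomogeneous.sum _ _ _ fun i _ => (isHomogeneous_X R i).mul (isHomogeneous_C _ _)

theorem IsAlternating.genericCombination {M : ι → Matrix n n R}
    (hM : ∀ i, (M i).IsAlternating) : (genericCombination M).IsAlternating :=
  IsAlternating.sum _ fun i _ => ((hM i).map C).smul (X i)

theorem isHomogeneous_det {σ : Type*} [Fintype n] [DecidableEq n]
    {A : Matrix n n (MvPolynomial σ R)} (hA : ∀ i j, (A i j).IsHomogeneous 1) :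
    A.det.IsHomogeneous (Fintype.card n) := by
  rw [det_apply]
  refine IsHomogeneous.sum _ _ _ fun τ _ => ?_
  have hprod : (∏ i, A (τ i) i).IsHomogeneous (Fintype.card n) := by
    simpa using IsHomogeneous.prod Finset.univ _ (fun _ => 1) fun i _ => hA (τ i) i
  rcases Int.units_eq_one_or (Equiv.Perm.sign τ) with h | h <;> rw [h]
  · simpa using hprod
  · simpa [Units.smul_def] using hprod.neg

theorem det_ne_zero_of_rank_eq_card {n K : Type*} [Fintype n] [DecidableEq n] [Field K]
    {A : Matrix n n K} (h : A.rank = Fintype.card n) : A.det ≠ 0 := by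
  have hrange : LinearMap.range A.mulVecLin = ⊤ :=
    Submodule.eq_top_of_finrank_eq (by rw [Module.finrank_fintype_fun_eq_card]; exact h)
  have hunit : IsUnit A := mulVec_surjective_iff_isUnit.mp (LinearMap.range_eq_top.mp hrange)
  exact ((isUnit_iff_isUnit_det A).mp hunit).ne_zero

theorem two_mul_card_le_card_of_isAlternating_of_det_ne_zero {ι n K : Type*} [Fintype ι]
    [Fintype n] [DecidableEq n] [Nonempty n] [Field K] [Fintype K] {M : ι → Matrix n n K}
    (hM : ∀ i, (M i).IsAlternating) (hdet : ∀ x : ι → K, x ≠ 0 → (∑ i, x i • M i).det ≠ 0) :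
    2 * Fintype.card ι ≤ Fintype.card n := by
  obtain ⟨g, hg⟩ := (IsAlternating.genericCombination hM).isSquare_det
  have hzero : ∀ x, eval x g = 0 ↔ x = 0 := by
    intro x
    rw [← mul_self_eq_zero, ← map_mul, ← hg, RingHom.map_det, RingHom.mapMatrix_apply,
      map_eval_genericCombination]
    refine ⟨fun h => by_contra fun hx => hdet x hx h, ?_⟩
    rintro rfl
    simp
  calc 2 * Fintype.card ι ≤ 2 * g.totalDegree :=
        Nat.mul_le_mul_left 2 (card_le_totalDegree_of_eval_eq_zero_iff hzero)
    _ ≤ Fintype.card n := two_mul_totalDegree_le_of_isHomogeneous_mul_self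
        (hg ▸ isHomogeneous_det (isHomogeneous_genericCombination_apply M))

end Matrix

theorem alt_full_distance_dim_bound_general
    {F : Type*} [Field F] [Fintype F] {n : ℕ}
    (C : Submodule F (Matrix (Fin n) (Fin n) F))
    (halt : ∀ M ∈ C, Mᵀ = -M ∧ ∀ i, M i i = 0)
    (hmin : ∀ M ∈ C, M ≠ 0 → M.rank = n) :
    finrank F ↥C ≤ n / 2 := by
  rcases Nat.eq_zero_or_pos n with rfl | hn
  · exact (Submodule.finrank_le C).trans_eq (finrank_eq_zero_of_subsingleton F _)
  have : Nonempty (Fin n) := ⟨⟨0, hn⟩⟩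
  let b := Module.finBasis F C
  have hdet (x : Fin (finrank F C) → F) (hx : x ≠ 0) :
      (∑ i, x i • (b i : Matrix (Fin n) (Fin n) F)).det ≠ 0 := by
    have hcomb : ∑ i, x i • (b i : Matrix (Fin n) (Fin n) F) = b.equivFun.symm x := by
      simp [Basis.equivFun_symm_apply]
    have hne : (b.equivFun.symm x : Matrix (Fin n) (Fin n) F) ≠ 0 := by
      rwa [Ne, Submodule.coe_eq_zero, LinearEquiv.map_eq_zero_iff]
    rw [hcomb]
    exact det_ne_zero_of_rank_eq_card (by simpa using hmin _ (Submodule.coe_mem _) hne)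
  have := two_mul_card_le_card_of_isAlternating_of_det_ne_zero (fun i => halt _ (b i).2) hdet
  simp only [Fintype.card_fin] at this
  omega

/-- An `F_q`-linear alternating code of minimum rank distance `n` (with `n` even)
has dimension at most `n/2`. -/
theorem alt_full_distance_dim_bound
    {F : Type*} [Field F] [Fintype F] {n : ℕ} (hn : Even n)
    (C : Submodule F (Matrix (Fin n) (Fin n) F))
    (halt : ∀ M ∈ C, Mᵀ = -M ∧ ∀ i, M i i = 0)
    (hmin : ∀ M ∈ C, M ≠ 0 → M.rank = n)
    (hne : ∃ M ∈ C, M ≠ 0) :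
    finrank F ↥C ≤ n / 2 :=
  alt_full_distance_dim_bound_general C halt hmin
end
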